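/- Let 𝒜 be an L-algebra on an infinite-dimensional real Banach space X and let 𝒜̄ be its closure in the strong operator topology (which is again an L-algebra). Then 𝒜 is of real type (respectively complex type, respectively quaternion type) if and only if 𝒜̄ is of real type (respectively complex type, respectively quaternion type). -/

import Mathlib

open Filter Topology

noncomputable section

variable {X : Type*} [NormedAddCommGroup X] [NormedSpace ℝ X]

/-- A bounded operator is of finite rank if its range is finite-dimensional. -/
def FiniteRank (T : X →L[ℝ] X) : Prop :=
  FiniteDimensional ℝ (LinearMap.range (T : X →ₗ[ℝ] X))

/-- Transitivity: every orbit of a nonzero vector is dense. -/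
def IsTransitiveAlg (A : Set (X →L[ℝ] X)) : Prop :=
  ∀ x : X, x ≠ 0 → ∀ y : X, ∀ ε > 0, ∃ T ∈ A, ‖T x - y‖ < ε

/-- A set of operators is an "L-set" if it is transitive and contains
a nonzero finite-rank operator. -/
def IsLSet (A : Set (X →L[ℝ] X)) : Prop :=
  IsTransitiveAlg A ∧ ∃ T ∈ A, T ≠ 0 ∧ FiniteRank T

/-- `A^F`: the finite-rank elements of `A`. -/
def AF (A : Set (X →L[ℝ] X)) : Set (X →L[ℝ] X) :=
  {T | T ∈ A ∧ FiniteRank T}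

/-- `X^F = span {T x : T ∈ A^F, x ∈ X}`. -/
def XF (A : Set (X →L[ℝ] X)) : Submodule ℝ X :=
  Submodule.span ℝ {y | ∃ T ∈ AF A, ∃ x : X, T x = y}

lemma mapsto_XF {A : Set (X →L[ℝ] X)} {T : X →L[ℝ] X} (hT : T ∈ AF A) :
    ∀ x ∈ XF A, (T : X →ₗ[ℝ] X) x ∈ XF A :=
  fun x _ => Submodule.subset_span ⟨T, hT, x, rfl⟩

/-- `𝔻`: the algebra of all `ℝ`-linear endomorphisms of `X^F` commuting with the
restriction to `X^F` of every operator in `A^F`. -/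
def DD (A : Set (X →L[ℝ] X)) : Subalgebra ℝ (Module.End ℝ (XF A)) :=
  Subalgebra.centralizer ℝ
    {S | ∃ T : X →L[ℝ] X, ∃ hT : T ∈ AF A, S = (T : X →ₗ[ℝ] X).restrict (mapsto_XF hT)}

def RealType (A : Set (X →L[ℝ] X)) : Prop := Nonempty (DD A ≃ₐ[ℝ] ℝ)
def ComplexType (A : Set (X →L[ℝ] X)) : Prop := Nonempty (DD A ≃ₐ[ℝ] ℂ)
def QuaternionType (A : Set (X →L[ℝ] X)) : Prop := Nonempty (DD A ≃ₐ[ℝ] Quaternion ℝ)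

/-- `A` is dense: on any finite linearly independent family, elements of `A`
approximate arbitrary prescribed values. -/
def IsDenseAlg (A : Set (X →L[ℝ] X)) : Prop :=
  ∀ ε > 0, ∀ n : ℕ, ∀ x : Fin n → X, LinearIndependent ℝ x →
    ∀ y : Fin n → X, ∃ T ∈ A, ∀ i, ‖T (x i) - y i‖ < ε

/-- `A` is `(1/k)`-dense. -/
def IsFracDense (k : ℕ) (A : Set (X →L[ℝ] X)) : Prop :=
  ∀ ε > 0, ∀ n : ℕ, ∀ x : Fin (k * n) → X, LinearIndependent ℝ x →
    ∀ y : Fin n → X, ∃ j : Fin n → Fin (k * n), ∃ T ∈ A,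
      ∀ i, ‖y i - T (x (j i))‖ < ε

/-- `T` lies in the closure of `A` in the strong operator topology. -/
def InSOTClosure (A : Set (X →L[ℝ] X)) (T : X →L[ℝ] X) : Prop :=
  ∀ ε > 0, ∀ s : Finset X, ∃ S ∈ A, ∀ x ∈ s, ‖S x - T x‖ < ε

/-- Closure of `A` in the strong operator topology. -/
def SOTcl (A : Set (X →L[ℝ] X)) : Set (X →L[ℝ] X) := {T | InSOTClosure A T}

/-- `A` is closed in the strong operator topology. -/
def SOTClosed (A : Set (X →L[ℝ] X)) : Prop :=
  ∀ T : X →L[ℝ] X, InSOTClosure A T → T ∈ A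

/-- A Lomonosov set: transitive, SOT-closed, containing a nonzero compact operator. -/
def IsLomonosov (A : Set (X →L[ℝ] X)) : Prop :=
  IsTransitiveAlg A ∧ SOTClosed A ∧ ∃ T ∈ A, T ≠ 0 ∧ IsCompactOperator (⇑T)

/-- Similarity of operator algebras. -/
def SimilarAlg (A B : Set (X →L[ℝ] X)) : Prop :=
  ∃ T : X ≃L[ℝ] X,
    (fun S => (T : X →L[ℝ] X).comp (S.comp ((T.symm : X →L[ℝ] X)))) '' A = B

/-- A partial complex structure: a densely defined operator `S` with `S ∘ S = -1`
(equivalently `S⁻¹ = -S`) mapping its domain onto itself. -/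
structure PCS (X : Type*) [NormedAddCommGroup X] [NormedSpace ℝ X] where
  domain : Submodule ℝ X
  dense' : Dense (domain : Set X)
  map : domain →ₗ[ℝ] domain
  anti : ∀ x : domain, map (map x) = -x

/-- A PCS is closed if its graph is closed in `X × X`. -/
def PCSClosed (S : PCS X) : Prop :=
  IsClosed (Set.range fun x : S.domain => ((x : X), (S.map x : X)))

/-- The algebra `𝒜_S` of all bounded operators leaving `D(S)` invariant and
commuting with `S` on `D(S)`. -/
def AlgS (S : PCS X) : Set (X →L[ℝ] X) :=
  {T | ∀ x : S.domain, ∃ y : S.domain, (y : X) = T x ∧ T (S.map x : X) = (S.map y : X)}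

/-- A representation of the quaternion group `G_ℍ` by linear bijections of a dense
subspace of `X`, with `π(1) = id` and `π(-1) = -id`. -/
structure QRep (X : Type*) [NormedAddCommGroup X] [NormedSpace ℝ X] where
  domain : Submodule ℝ X
  dense' : Dense (domain : Set X)
  pi : QuaternionGroup 2 → Module.End ℝ domain
  pi_one : pi 1 = 1
  pi_mul : ∀ g h, pi (g * h) = pi g * pi h
  pi_neg_one : pi (QuaternionGroup.a 2) = -1

/-- The representation is closed. -/
def QRepClosed (ρ : QRep X) : Prop :=
  ∀ (x : ℕ → ρ.domain) (w : QuaternionGroup 2 → X),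
    (∀ g, Tendsto (fun n => (ρ.pi g (x n) : X)) atTop (𝓝 (w g))) →
    ∃ z : ρ.domain, ∀ g, w g = (ρ.pi g z : X)

/-- The representation is regular: the functionals bounded on the orbit of the
representation are weak*-dense in the dual. -/
def QRepRegular (ρ : QRep X) : Prop :=
  Dense ((StrongDual.toWeakDual) ''
    {f : StrongDual ℝ X |
      ∃ C > 0, ∀ g : QuaternionGroup 2, ∀ x : ρ.domain, |f (ρ.pi g x : X)| ≤ C * ‖(x : X)‖})

/-- The algebra `𝒜_π`. -/
def AlgPi (ρ : QRep X) : Set (X →L[ℝ] X) :=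
  {T | ∀ x : ρ.domain, ∃ y : ρ.domain, (y : X) = T x ∧
    ∀ g : QuaternionGroup 2, T (ρ.pi g x : X) = (ρ.pi g y : X)}

/-! The commutant `𝔻` of an L-algebra is governed by the orbit of a single nonzero `u ∈ X^F`:
every vector of `X^F` is exactly `T u` with `T ∈ 𝒜^F`, so `D ∈ 𝔻` is determined by `D u` through
`D (T u) = T (D u)`. Restriction from `X^F(𝒜̄) ⊇ X^F(𝒜)` is therefore an injective algebra map
`𝔻(𝒜̄) → 𝔻(𝒜)`. It is onto because `D ∈ 𝔻(𝒜)` extends by `T u ↦ T (D u)` for `T ∈ 𝒜̄^F`, which is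
well defined: for `R ∈ 𝒜^F`, `D` is bounded on the finite-dimensional range of `R`, so
`‖R S D u‖ ≤ K ‖R S u‖` for `S ∈ 𝒜`, and this inequality survives strong limits `S → T`. -/

lemma FiniteRank.of_range_le {T S : X →L[ℝ] X} (hS : FiniteRank S)
    (h : LinearMap.range (T : X →ₗ[ℝ] X) ≤ LinearMap.range (S : X →ₗ[ℝ] X)) : FiniteRank T :=
  haveI : FiniteDimensional ℝ (LinearMap.range (S : X →ₗ[ℝ] X)) := hS
  Submodule.finiteDimensional_of_le h

lemma finiteRank_zero : FiniteRank (0 : X →L[ℝ] X) := by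
  rw [FiniteRank, ContinuousLinearMap.toLinearMap_zero, LinearMap.range_zero]
  infer_instance

lemma FiniteRank.add {T S : X →L[ℝ] X} (hT : FiniteRank T) (hS : FiniteRank S) :
    FiniteRank (T + S) :=
  haveI : FiniteDimensional ℝ (LinearMap.range (T : X →ₗ[ℝ] X)) := hT
  haveI : FiniteDimensional ℝ (LinearMap.range (S : X →ₗ[ℝ] X)) := hS
  Submodule.finiteDimensional_of_le (LinearMap.range_add_le (T : X →ₗ[ℝ] X) S)

lemma FiniteRank.smul {T : X →L[ℝ] X} (hT : FiniteRank T) (c : ℝ) : FiniteRank (c • T) :=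
  hT.of_range_le (LinearMap.range_smul_le_range (T : X →ₗ[ℝ] X) c)

lemma FiniteRank.mul {T : X →L[ℝ] X} (hT : FiniteRank T) (S : X →L[ℝ] X) :
    FiniteRank (T * S) :=
  hT.of_range_le (LinearMap.range_comp_le_range (S : X →ₗ[ℝ] X) (T : X →ₗ[ℝ] X))

def finiteRankPart (C : NonUnitalSubalgebra ℝ (X →L[ℝ] X)) : Submodule ℝ (X →L[ℝ] X) where
  carrier := AF C
  add_mem' hT hS := ⟨add_mem hT.1 hS.1, hT.2.add hS.2⟩
  zero_mem' := ⟨zero_mem C, finiteRank_zero⟩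
  smul_mem' c _ hT := ⟨SMulMemClass.smul_mem c hT.1, hT.2.smul c⟩

lemma mul_mem_AF {C : NonUnitalSubalgebra ℝ (X →L[ℝ] X)} {T S : X →L[ℝ] X}
    (hT : T ∈ AF (C : Set (X →L[ℝ] X))) (hS : S ∈ C) : T * S ∈ AF (C : Set (X →L[ℝ] X)) :=
  ⟨mul_mem hT.1 hS, hT.2.mul S⟩

lemma AF_mono {C C' : Set (X →L[ℝ] X)} (h : C ⊆ C') : AF C ⊆ AF C' :=
  fun _ hT => ⟨h hT.1, hT.2⟩

lemma XF_mono {C C' : Set (X →L[ℝ] X)} (h : C ⊆ C') : XF C ≤ XF C' :=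
  Submodule.span_mono fun _ ⟨T, hT, x, hx⟩ => ⟨T, AF_mono h hT, x, hx⟩

lemma mem_XF_apply {C : Set (X →L[ℝ] X)} {T : X →L[ℝ] X} (hT : T ∈ AF C) (x : X) :
    T x ∈ XF C :=
  Submodule.subset_span ⟨T, hT, x, rfl⟩

lemma SOTcl_eq_preimage_closure (A : Set (X →L[ℝ] X)) :
    SOTcl A = (⇑) ⁻¹' closure ((⇑) '' A : Set (X → X)) := by
  ext T
  refine ⟨fun hT => mem_closure_iff_nhds.2 fun t ht => ?_, fun hT ε hε s => ?_⟩
  · rw [nhds_pi, Filter.mem_pi'] at ht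
    obtain ⟨I, r, hr, hrt⟩ := ht
    have : ∀ᶠ δ in 𝓝[>] (0 : ℝ), ∀ x ∈ I, Metric.ball (T x) δ ⊆ r x := by
      refine (Filter.eventually_all_finset I).2 fun x _ => ?_
      obtain ⟨ε, hε, hball⟩ := Metric.mem_nhds_iff.1 (hr x)
      filter_upwards [nhdsWithin_le_nhds (eventually_le_nhds hε)] with δ hδ
      exact (Metric.ball_subset_ball hδ).trans hball
    obtain ⟨δ, hδ, hδpos⟩ := (this.and self_mem_nhdsWithin).exists
    obtain ⟨S, hS, hST⟩ := hT δ hδpos I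
    refine ⟨S, hrt fun x hx => hδ x hx ?_, S, hS, rfl⟩
    rw [Metric.mem_ball, dist_eq_norm]
    exact hST x hx
  · have hnhds : (s : Set X).pi (fun x => Metric.ball (T x) ε) ∈ 𝓝 (⇑T) :=
      set_pi_mem_nhds s.finite_toSet fun x _ => Metric.ball_mem_nhds _ hε
    obtain ⟨_, hball, S, hS, rfl⟩ := mem_closure_iff_nhds.1 hT _ hnhds
    refine ⟨S, hS, fun x hx => ?_⟩
    rw [← dist_eq_norm]
    exact hball x hx

lemma subset_SOTcl (A : Set (X →L[ℝ] X)) : A ⊆ SOTcl A :=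
  fun T hT => by
    rw [SOTcl_eq_preimage_closure]
    exact subset_closure ⟨T, hT, rfl⟩

lemma SOTcl.apply_mem_of_isClosed {A : Set (X →L[ℝ] X)} {K : Set (X × X)} (hK : IsClosed K)
    (a b : X) (hA : ∀ S ∈ A, (S a, S b) ∈ K) {T : X →L[ℝ] X} (hT : T ∈ SOTcl A) :
    (T a, T b) ∈ K := by
  rw [SOTcl_eq_preimage_closure] at hT
  refine hK.closure_subset
    (map_mem_closure (f := fun f : X → X => (f a, f b)) (by fun_prop) hT ?_)
  rintro _ ⟨S, hS, rfl⟩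
  exact hA S hS

def sotClosure (A : NonUnitalSubalgebra ℝ (X →L[ℝ] X)) : NonUnitalSubalgebra ℝ (X →L[ℝ] X) where
  carrier := SOTcl A
  zero_mem' := subset_SOTcl _ (zero_mem A)
  add_mem' {T S} hT hS := by
    rw [SOTcl_eq_preimage_closure] at hT hS ⊢
    refine map_mem_closure₂ (f := (· + ·)) continuous_add hT hS ?_
    rintro _ ⟨T', hT', rfl⟩ _ ⟨S', hS', rfl⟩
    exact ⟨T' + S', add_mem hT' hS', rfl⟩
  smul_mem' c T hT := by
    rw [SOTcl_eq_preimage_closure] at hT ⊢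
    refine map_mem_closure (f := fun f : X → X => c • f) (continuous_const_smul c) hT ?_
    rintro _ ⟨T', hT', rfl⟩
    exact ⟨c • T', SMulMemClass.smul_mem c hT', rfl⟩
  mul_mem' {T S} hT hS := by
    -- composition is only separately continuous pointwise, so approximate one factor at a time
    rw [SOTcl_eq_preimage_closure] at hT hS ⊢
    have hmul_right : ∀ S' ∈ A, ⇑(T * S') ∈ closure ((⇑) '' (A : Set (X →L[ℝ] X))) := by
      intro S' hS'
      refine map_mem_closure (f := fun f : X → X => f ∘ S') (by fun_prop) hT ?_
      rintro _ ⟨T', hT', rfl⟩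
      exact ⟨T' * S', mul_mem hT' hS', rfl⟩
    rw [← closure_closure]
    refine map_mem_closure (f := fun f : X → X => T ∘ f) (by fun_prop) hS ?_
    rintro _ ⟨S', hS', rfl⟩
    exact hmul_right S' hS'

lemma IsTransitiveAlg.mono {A B : Set (X →L[ℝ] X)} (hA : IsTransitiveAlg A) (h : A ⊆ B) :
    IsTransitiveAlg B := fun x hx y ε hε =>
  let ⟨T, hT, hTx⟩ := hA x hx y ε hε
  ⟨T, h hT, hTx⟩

lemma IsLSet.mono {A B : Set (X →L[ℝ] X)} (hA : IsLSet A) (h : A ⊆ B) : IsLSet B :=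
  let ⟨T, hT, hT0, hTF⟩ := hA.2
  ⟨hA.1.mono h, T, h hT, hT0, hTF⟩

lemma IsTransitiveAlg.dense_orbit {A : Set (X →L[ℝ] X)} (hA : IsTransitiveAlg A) {x : X}
    (hx : x ≠ 0) : Dense ((fun T : X →L[ℝ] X => T x) '' A) :=
  Metric.dense_iff.2 fun y ε hε =>
    let ⟨T, hT, hTx⟩ := hA x hx y ε hε
    ⟨T x, by rwa [Metric.mem_ball, dist_eq_norm], T, hT, rfl⟩

section Orbit

variable {C : NonUnitalSubalgebra ℝ (X →L[ℝ] X)}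

/-- `T (C u)` is finite-dimensional, hence closed, and by transitivity it is dense in `T X`. -/
lemma exists_AF_apply_eq (hC : IsTransitiveAlg (C : Set (X →L[ℝ] X))) {u : X} (hu : u ≠ 0)
    {w : X} (hw : w ∈ XF (C : Set (X →L[ℝ] X))) :
    ∃ T ∈ AF (C : Set (X →L[ℝ] X)), T u = w := by
  suffices XF (C : Set (X →L[ℝ] X)) ≤ (finiteRankPart C).map
      (ContinuousLinearMap.apply ℝ X u : (X →L[ℝ] X) →ₗ[ℝ] X) by
    obtain ⟨T, hT, rfl⟩ := this hw
    exact ⟨T, hT, rfl⟩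
  refine Submodule.span_le.2 ?_
  rintro _ ⟨T, hT, x, rfl⟩
  let J : Submodule ℝ X := (NonUnitalSubalgebra.toSubmodule C).map
    ((T : X →ₗ[ℝ] X) ∘ₗ (ContinuousLinearMap.apply ℝ X u : (X →L[ℝ] X) →ₗ[ℝ] X))
  have : FiniteDimensional ℝ (LinearMap.range (T : X →ₗ[ℝ] X)) := hT.2
  have : FiniteDimensional ℝ J :=
    Submodule.finiteDimensional_of_le
      (LinearMap.map_le_range.trans (LinearMap.range_comp_le_range _ _))
  have hTx : T x ∈ closure (J : Set X) := by
    refine T.continuous.range_subset_closure_image_dense (hC.dense_orbit hu) ⟨x, rfl⟩ |>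
      closure_mono ?_
    rintro _ ⟨_, ⟨S, hS, rfl⟩, rfl⟩
    exact ⟨S, hS, rfl⟩
  rw [J.closed_of_finiteDimensional.closure_eq] at hTx
  obtain ⟨S, hS, hSx⟩ := hTx
  exact ⟨T * S, mul_mem_AF hT hS, hSx⟩

lemma IsLSet.exists_AF_apply_ne_zero (hC : IsLSet (C : Set (X →L[ℝ] X))) {w : X} (hw : w ≠ 0) :
    ∃ T ∈ AF (C : Set (X →L[ℝ] X)), T w ≠ 0 := by
  obtain ⟨T₀, hT₀, hT₀ne, hT₀F⟩ := hC.2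
  by_contra! h
  refine hT₀ne (DFunLike.coe_injective ?_)
  refine Continuous.ext_on (hC.1.dense_orbit hw) T₀.continuous continuous_const ?_
  rintro _ ⟨S, hS, rfl⟩
  exact h (T₀ * S) (mul_mem_AF ⟨hT₀, hT₀F⟩ hS)

end Orbit

lemma LinearMap.exists_bound_of_mem_finiteDimensional {Y : Type*} [NormedAddCommGroup Y]
    [NormedSpace ℝ Y] {V : Submodule ℝ X} (f : V →ₗ[ℝ] Y) (F : Submodule ℝ X)
    [FiniteDimensional ℝ F] : ∃ K, ∀ v : V, (v : X) ∈ F → ‖f v‖ ≤ K * ‖v‖ := by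
  let W := F.comap V.subtype
  have : FiniteDimensional ℝ W :=
    .of_injective (LinearMap.codRestrict F (V.subtype ∘ₗ W.subtype) fun w => w.2)
      fun _ _ h => V.injective_subtype.comp W.injective_subtype (congrArg (Subtype.val : F → X) h)
  let g := LinearMap.toContinuousLinearMap (f ∘ₗ W.subtype)
  exact ⟨‖g‖, fun v hv => g.le_opNorm ⟨v, hv⟩⟩

section Commutant

lemma coe_apply_restrict_of_mem_DD {C : Set (X →L[ℝ] X)} {D : Module.End ℝ (XF C)}
    (hD : D ∈ DD C) {T : X →L[ℝ] X} (hT : T ∈ AF C) (v : XF C) :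
    (D ((T : X →ₗ[ℝ] X).restrict (mapsto_XF hT) v) : X) = T (D v) := by
  have h := LinearMap.congr_fun ((Subalgebra.mem_centralizer_iff ℝ).1 hD _ ⟨T, hT, rfl⟩) v
  exact (congrArg Subtype.val h).symm

variable {A : NonUnitalSubalgebra ℝ (X →L[ℝ] X)} {D : Module.End ℝ (XF (A : Set (X →L[ℝ] X)))}

/-- `D` is bounded on the finite-dimensional `T X` and intertwines `T S` for `S ∈ A`; the
resulting inequality is a closed condition, so it passes to the SOT closure. -/
lemma exists_norm_apply_DD_le (hD : D ∈ DD (A : Set (X →L[ℝ] X))) {T : X →L[ℝ] X}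
    (hT : T ∈ AF (A : Set (X →L[ℝ] X))) :
    ∃ K, ∀ T' ∈ SOTcl (A : Set (X →L[ℝ] X)), ∀ v : XF (A : Set (X →L[ℝ] X)),
      ‖T (T' (D v))‖ ≤ K * ‖T (T' v)‖ := by
  have : FiniteDimensional ℝ (LinearMap.range (T : X →ₗ[ℝ] X)) := hT.2
  obtain ⟨K, hK⟩ := LinearMap.exists_bound_of_mem_finiteDimensional
    ((XF (A : Set (X →L[ℝ] X))).subtype ∘ₗ D) (LinearMap.range (T : X →ₗ[ℝ] X))
  refine ⟨K, fun T' hT' v => SOTcl.apply_mem_of_isClosed (K := {p | ‖T p.2‖ ≤ K * ‖T p.1‖})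
    (isClosed_le (by fun_prop) (by fun_prop)) v (D v) (fun S hS => ?_) hT'⟩
  have hTS := mul_mem_AF hT hS
  calc ‖T (S (D v))‖
      = ‖(D (((T * S : X →L[ℝ] X) : X →ₗ[ℝ] X).restrict (mapsto_XF hTS) v) : X)‖ := by
        rw [coe_apply_restrict_of_mem_DD hD hTS]; rfl
    _ ≤ K * ‖T (S v)‖ := hK _ ⟨S v, rfl⟩

lemma apply_DD_eq_zero (hA : IsLSet (A : Set (X →L[ℝ] X))) (hD : D ∈ DD (A : Set (X →L[ℝ] X)))
    {T' : X →L[ℝ] X} (hT' : T' ∈ SOTcl (A : Set (X →L[ℝ] X))) {v : XF (A : Set (X →L[ℝ] X))}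
    (hv : T' v = 0) : T' (D v) = 0 := by
  by_contra hne
  obtain ⟨T, hT, hTne⟩ := hA.exists_AF_apply_ne_zero hne
  obtain ⟨K, hK⟩ := exists_norm_apply_DD_le hD hT
  have := hK T' hT' v
  rw [hv, map_zero, norm_zero, mul_zero] at this
  exact hTne (norm_le_zero_iff.1 this)

end Commutant

section Extension

variable {C : NonUnitalSubalgebra ℝ (X →L[ℝ] X)}

lemma DD_ext (hC : IsTransitiveAlg (C : Set (X →L[ℝ] X))) {u : XF (C : Set (X →L[ℝ] X))}
    (hu : u ≠ 0) {D₁ D₂ : Module.End ℝ (XF (C : Set (X →L[ℝ] X)))}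
    (hD₁ : D₁ ∈ DD (C : Set (X →L[ℝ] X))) (hD₂ : D₂ ∈ DD (C : Set (X →L[ℝ] X)))
    (h : D₁ u = D₂ u) : D₁ = D₂ := by
  ext w
  obtain ⟨T, hT, hTu⟩ := exists_AF_apply_eq hC (mt Submodule.coe_eq_zero.1 hu) w.2
  have hw : w = (T : X →ₗ[ℝ] X).restrict (mapsto_XF hT) u := Subtype.ext hTu.symm
  rw [hw, coe_apply_restrict_of_mem_DD hD₁ hT, coe_apply_restrict_of_mem_DD hD₂ hT, h]

/-- `D` is `T u ↦ T z`, factored through the quotient by the kernel of `T ↦ T u`, which is onto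
`X^F` by `exists_AF_apply_eq`. -/
lemma exists_mem_DD_apply (hC : IsTransitiveAlg (C : Set (X →L[ℝ] X))) {u : X} (hu : u ≠ 0)
    {z : X} (hz : ∀ T ∈ AF (C : Set (X →L[ℝ] X)), T u = 0 → T z = 0) :
    ∃ D ∈ DD (C : Set (X →L[ℝ] X)), ∀ (T : X →L[ℝ] X) (hT : T ∈ AF (C : Set (X →L[ℝ] X))),
      (D ⟨T u, mem_XF_apply hT u⟩ : X) = T z := by
  let ev : X → finiteRankPart C →ₗ[ℝ] XF (C : Set (X →L[ℝ] X)) := fun x =>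
    LinearMap.codRestrict _
      ((ContinuousLinearMap.apply ℝ X x : (X →L[ℝ] X) →ₗ[ℝ] X) ∘ₗ (finiteRankPart C).subtype)
      fun T => mem_XF_apply T.2 x
  have hsurj : Function.Surjective (ev u) := fun w =>
    let ⟨T, hT, hTu⟩ := exists_AF_apply_eq hC hu w.2
    ⟨⟨T, hT⟩, Subtype.ext hTu⟩
  have hker : LinearMap.ker (ev u) ≤ LinearMap.ker (ev z) := fun T hT =>
    Subtype.ext (hz T.1 T.2 (congrArg Subtype.val hT))
  let D := (LinearMap.ker (ev u)).liftQ (ev z) hker ∘ₗ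
    ((ev u).quotKerEquivOfSurjective hsurj).symm.toLinearMap
  have hD : ∀ T, D (ev u T) = ev z T := fun T => by
    simp only [D, LinearMap.comp_apply, LinearEquiv.coe_coe,
      LinearMap.quotKerEquivOfSurjective_symm_apply, Submodule.liftQ_apply]
  refine ⟨D, (Subalgebra.mem_centralizer_iff ℝ).2 ?_,
    fun T hT => congrArg Subtype.val (hD ⟨T, hT⟩)⟩
  rintro _ ⟨S, hS, rfl⟩
  ext w
  obtain ⟨T, rfl⟩ := hsurj w
  have hST : ev u ⟨S * T, mul_mem_AF hS T.2.1⟩ =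
      (S : X →ₗ[ℝ] X).restrict (mapsto_XF hS) (ev u T) :=
    rfl
  simp only [Module.End.mul_apply, ← hST, hD]
  rfl

end Extension

section Restriction

variable {C C' : Set (X →L[ℝ] X)}

lemma restrict_mem_DD (hCC' : C ⊆ C') {D : Module.End ℝ (XF C')} (hD : D ∈ DD C')
    (hmaps : ∀ v : XF C, (D (Submodule.inclusion (XF_mono hCC') v) : X) ∈ XF C) :
    LinearMap.codRestrict (XF C)
      ((XF C').subtype ∘ₗ D ∘ₗ Submodule.inclusion (XF_mono hCC')) hmaps ∈ DD C := by
  refine (Subalgebra.mem_centralizer_iff ℝ).2 ?_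
  rintro _ ⟨T, hT, rfl⟩
  ext v
  have hinc : Submodule.inclusion (XF_mono hCC') ((T : X →ₗ[ℝ] X).restrict (mapsto_XF hT) v) =
      (T : X →ₗ[ℝ] X).restrict (mapsto_XF (AF_mono hCC' hT))
        (Submodule.inclusion (XF_mono hCC') v) :=
    rfl
  change T (D (Submodule.inclusion _ v) : X) = (D (Submodule.inclusion _ _) : X)
  rw [hinc, coe_apply_restrict_of_mem_DD hD (AF_mono hCC' hT)]

def restrictDD (hCC' : C ⊆ C')
    (hmaps : ∀ D ∈ DD C', ∀ v : XF C, (D (Submodule.inclusion (XF_mono hCC') v) : X) ∈ XF C) :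
    DD C' →ₐ[ℝ] DD C :=
  AlgHom.ofLinearMap
    { toFun := fun D => ⟨_, restrict_mem_DD hCC' D.2 (hmaps D.1 D.2)⟩
      map_add' := fun _ _ => rfl
      map_smul' := fun _ _ => rfl }
    rfl fun _ _ => rfl

end Restriction

lemma nonempty_algEquiv_DD_SOTcl {A : NonUnitalSubalgebra ℝ (X →L[ℝ] X)}
    (hA : IsLSet (A : Set (X →L[ℝ] X))) :
    Nonempty (DD (SOTcl (A : Set (X →L[ℝ] X))) ≃ₐ[ℝ] DD (A : Set (X →L[ℝ] X))) := by
  have hAB : (A : Set (X →L[ℝ] X)) ⊆ sotClosure A := subset_SOTcl _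
  have hB : IsTransitiveAlg (sotClosure A : Set (X →L[ℝ] X)) := hA.1.mono hAB
  obtain ⟨T₀, hT₀, hT₀ne, hT₀F⟩ := hA.2
  obtain ⟨x, hu⟩ : ∃ x, T₀ x ≠ 0 := DFunLike.ne_iff.1 hT₀ne
  set u := T₀ x
  have huA : u ∈ XF (A : Set (X →L[ℝ] X)) := mem_XF_apply ⟨hT₀, hT₀F⟩ x
  have hmaps : ∀ D ∈ DD (sotClosure A : Set (X →L[ℝ] X)), ∀ v : XF (A : Set (X →L[ℝ] X)),
      (D (Submodule.inclusion (XF_mono hAB) v) : X) ∈ XF (A : Set (X →L[ℝ] X)) := by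
    intro D hD v
    obtain ⟨T, hT, hTu⟩ := exists_AF_apply_eq hA.1 hu v.2
    have hv : Submodule.inclusion (XF_mono hAB) v =
        (T : X →ₗ[ℝ] X).restrict (mapsto_XF (AF_mono hAB hT)) ⟨u, XF_mono hAB huA⟩ :=
      Subtype.ext hTu.symm
    rw [hv, coe_apply_restrict_of_mem_DD hD (AF_mono hAB hT)]
    exact mem_XF_apply hT _
  refine ⟨AlgEquiv.ofBijective (restrictDD hAB hmaps) ⟨fun D₁ D₂ h => ?_, fun D => ?_⟩⟩
  · have hDu := congrArg Subtype.val (LinearMap.congr_fun (congrArg Subtype.val h) ⟨u, huA⟩)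
    exact Subtype.ext (DD_ext hB (u := ⟨u, XF_mono hAB huA⟩) (by simpa using hu) D₁.2 D₂.2
      (Subtype.ext hDu))
  · obtain ⟨φ, hφ, hφu⟩ := exists_mem_DD_apply hB hu (z := D.1 ⟨u, huA⟩)
      fun T hT hTu => apply_DD_eq_zero hA D.2 hT.1 hTu
    refine ⟨⟨φ, hφ⟩, Subtype.ext (LinearMap.ext fun v => Subtype.ext ?_)⟩
    obtain ⟨T, hT, hTu⟩ := exists_AF_apply_eq hA.1 hu v.2
    have hv : v = (T : X →ₗ[ℝ] X).restrict (mapsto_XF hT) ⟨u, huA⟩ := Subtype.ext hTu.symm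
    calc (φ (Submodule.inclusion (XF_mono hAB) v) : X)
        = φ ⟨T u, mem_XF_apply (AF_mono hAB hT) u⟩ := by simp only [hv]; rfl
      _ = T (D.1 ⟨u, huA⟩) := hφu T (AF_mono hAB hT)
      _ = D.1 v := by rw [hv, coe_apply_restrict_of_mem_DD D.2 hT]

theorem stmt8_general {X : Type*} [NormedAddCommGroup X] [NormedSpace ℝ X]
    (A : NonUnitalSubalgebra ℝ (X →L[ℝ] X))
    (hA : IsLSet (A : Set (X →L[ℝ] X))) :
    IsLSet (SOTcl (A : Set (X →L[ℝ] X))) ∧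
    (RealType (A : Set (X →L[ℝ] X)) ↔ RealType (SOTcl (A : Set (X →L[ℝ] X)))) ∧
    (ComplexType (A : Set (X →L[ℝ] X)) ↔ ComplexType (SOTcl (A : Set (X →L[ℝ] X)))) ∧
    (QuaternionType (A : Set (X →L[ℝ] X)) ↔
      QuaternionType (SOTcl (A : Set (X →L[ℝ] X)))) := by
  obtain ⟨e⟩ := nonempty_algEquiv_DD_SOTcl hA
  refine ⟨hA.mono (subset_SOTcl _), ?_, ?_, ?_⟩ <;>
    exact ⟨fun ⟨i⟩ => ⟨e.trans i⟩, fun ⟨i⟩ => ⟨e.symm.trans i⟩⟩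

/-- An L-algebra `𝒜` is of real (resp. complex, quaternion) type iff its
SOT-closure (which is again an L-algebra) is of real (resp. complex, quaternion) type. -/
theorem stmt8 {X : Type*} [NormedAddCommGroup X] [NormedSpace ℝ X] [CompleteSpace X]
    (hinf : ¬ FiniteDimensional ℝ X)
    (A : NonUnitalSubalgebra ℝ (X →L[ℝ] X))
    (hA : IsLSet (A : Set (X →L[ℝ] X))) :
    IsLSet (SOTcl (A : Set (X →L[ℝ] X))) ∧
    (RealType (A : Set (X →L[ℝ] X)) ↔ RealType (SOTcl (A : Set (X →L[ℝ] X)))) ∧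
    (ComplexType (A : Set (X →L[ℝ] X)) ↔ ComplexType (SOTcl (A : Set (X →L[ℝ] X)))) ∧
    (QuaternionType (A : Set (X →L[ℝ] X)) ↔
      QuaternionType (SOTcl (A : Set (X →L[ℝ] X)))) :=
  stmt8_general A hA
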